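/- arXiv:2602.08760 — 7 statements merged into one kernel-verified Lean document; each statement's English description precedes it below -/
import Mathlib

section
/- Let n ≥ 1 be an integer, let ε ∈ {1, −1}, and let ζ be a complex number with ζ ≠ 1, ζ ≠ −1 and ζⁿ = ε. Set x = ζ + ζ⁻¹ (so that x² − 4 ≠ 0). Then the formal derivative of S_n satisfies S_n'(x) = 2nε/(x² − 4). -/
open Polynomial

/-- Chebyshev-type polynomials of the first kind: `T 0 = 2`, `T 1 = X`,
`T (n+2) = X * T (n+1) - T n`, for natural indices. -/
noncomputable def chebT : ℕ → Polynomial ℤ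
  | 0 => 2
  | 1 => X
  | n + 2 => X * chebT (n + 1) - chebT n

/-- Chebyshev-type polynomials of the second kind: `S 0 = 0`, `S 1 = 1`,
`S (n+2) = X * S (n+1) - S n`, for natural indices. -/
noncomputable def chebS : ℕ → Polynomial ℤ
  | 0 => 0
  | 1 => 1
  | n + 2 => X * chebS (n + 1) - chebS n

/-- `T n` for `n : ℤ`, extended by `T (-n) = T n`. -/
noncomputable def Tz (n : ℤ) : Polynomial ℤ := chebT n.natAbs

/-- `S n` for `n : ℤ`, extended by `S (-n) = - S n`. -/
noncomputable def Sz (n : ℤ) : Polynomial ℤ :=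
  if 0 ≤ n then chebS n.natAbs else -chebS n.natAbs

lemma chebT_rec (m : ℕ) : chebT (m + 2) = X * chebT (m + 1) - chebT m := rfl

lemma chebS_rec (m : ℕ) : chebS (m + 2) = X * chebS (m + 1) - chebS m := rfl

lemma cheb_key1 : ∀ m : ℕ,
    X * chebT (m + 1) - 2 * chebT m = (X ^ 2 - 4) * chebS (m + 1)
  | 0 => by simp only [chebT, chebS]; ring
  | 1 => by simp only [chebT, chebS]; ring
  | (m + 2) => by
      have h1 := cheb_key1 m
      have h2 := cheb_key1 (m + 1)
      have h3 : chebT (m + 1 + 1) = X * chebT (m + 1) - chebT m := rfl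
      rw [chebT_rec (m + 1), chebT_rec m, chebS_rec (m + 1)]
      linear_combination X * h2 - h1 - X ^ 2 * h3

lemma cheb_key2 : ∀ m : ℕ,
    (X ^ 2 - 4) * derivative (chebS m)
      = (m : Polynomial ℤ) * chebT m - X * chebS m
  | 0 => by simp [chebS, chebT]
  | 1 => by simp [chebS, chebT]
  | (m + 2) => by
      have h1 := cheb_key2 m
      have h2 := cheb_key2 (m + 1)
      have e := cheb_key1 m
      rw [chebS_rec m, chebT_rec m]
      rw [derivative_sub, derivative_mul, derivative_X]
      push_cast at h2 ⊢
      linear_combination X * h2 - h1 - e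

lemma chebT_eval (z w : ℂ) (hw : z * w = 1) :
    ∀ m : ℕ, aeval (z + w) (chebT m) = z ^ m + w ^ m
  | 0 => by simp only [chebT, map_ofNat]; norm_num
  | 1 => by simp [chebT]
  | (m + 2) => by
      have h1 := chebT_eval z w hw m
      have h2 := chebT_eval z w hw (m + 1)
      rw [chebT_rec, map_sub, map_mul, aeval_X, h1, h2]
      linear_combination (z ^ m + w ^ m) * hw

lemma chebS_eval (z w : ℂ) (hw : z * w = 1) :
    ∀ m : ℕ, (z - w) * aeval (z + w) (chebS m) = z ^ m - w ^ m
  | 0 => by simp [chebS]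
  | 1 => by simp [chebS]
  | (m + 2) => by
      have h1 := chebS_eval z w hw m
      have h2 := chebS_eval z w hw (m + 1)
      rw [chebS_rec, map_sub, map_mul, aeval_X]
      linear_combination (z + w) * h2 - h1 + (z ^ m - w ^ m) * hw

theorem Sz_derivative_root (n : ℤ) (hn : 1 ≤ n) (ε : ℂ) (hε : ε = 1 ∨ ε = -1)
    (ζ : ℂ) (hζ1 : ζ ≠ 1) (hζ2 : ζ ≠ -1) (hζn : ζ ^ n = ε) :
    aeval (ζ + ζ⁻¹) (derivative (Sz n)) =
      2 * (n : ℂ) * ε / ((ζ + ζ⁻¹) ^ 2 - 4) := by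
  have hε0 : ε ≠ 0 := by rcases hε with h | h <;> simp [h]
  have hζ0 : ζ ≠ 0 := by
    intro h
    rw [h, zero_zpow n (by omega)] at hζn
    exact hε0 hζn.symm
  set w : ℂ := ζ⁻¹ with hwdef
  have hw : ζ * w = 1 := mul_inv_cancel₀ hζ0
  set m : ℕ := n.natAbs with hmdef
  have hmn : (m : ℤ) = n := Int.natAbs_of_nonneg (by omega)
  have hSz : Sz n = chebS m := by rw [Sz, if_pos (by omega)]
  have hzm : ζ ^ m = ε := by
    rw [← hζn, ← hmn, zpow_natCast]
  have hinv : ε⁻¹ = ε := by rcases hε with h | h <;> rw [h] <;> norm_num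
  have hwm : w ^ m = ε := by
    rw [hwdef, inv_pow, hzm, hinv]
  have hsub : ζ - w ≠ 0 := by
    intro h
    have hζw : ζ = w := sub_eq_zero.mp h
    have h2 : ζ * ζ = 1 := by nth_rewrite 2 [hζw]; exact hw
    have h3 : (ζ - 1) * (ζ + 1) = 0 := by linear_combination h2
    rcases mul_eq_zero.mp h3 with h4 | h4
    · exact hζ1 (by linear_combination h4)
    · exact hζ2 (by linear_combination h4)
  have hS0 : aeval (ζ + w) (chebS m) = 0 := by
    have h := chebS_eval ζ w hw m
    rw [hzm, hwm, sub_self] at h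
    exact (mul_eq_zero.mp h).resolve_left hsub
  have hT : aeval (ζ + w) (chebT m) = 2 * ε := by
    rw [chebT_eval ζ w hw m, hzm, hwm]; ring
  have hdval : (ζ + w) ^ 2 - 4 = (ζ - w) ^ 2 := by linear_combination 4 * hw
  have hden : (ζ + w) ^ 2 - 4 ≠ 0 := by
    rw [hdval]; exact pow_ne_zero 2 hsub
  have hk : aeval (ζ + w) ((X ^ 2 - 4 : Polynomial ℤ) * derivative (chebS m))
      = aeval (ζ + w) ((m : Polynomial ℤ) * chebT m - X * chebS m) := by
    rw [cheb_key2 m]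
  simp only [map_mul, map_sub, map_pow, aeval_X, map_ofNat, map_natCast, hS0,
    hT, mul_zero, sub_zero] at hk
  have hmc : ((m : ℕ) : ℂ) = (n : ℂ) := by
    rw [← hmn]; push_cast; ring
  rw [hSz, eq_div_iff hden]
  rw [hmc] at hk
  linear_combination hk
end

section
/- Let n ≥ 1 be an integer, let ε ∈ {1, −1}, and let ζ be a complex number with ζ ≠ 1, ζ ≠ −1 and ζⁿ = ε. Set x = ζ + ζ⁻¹ (so that x² − 4 ≠ 0). Then the formal derivatives of S_{n+1} and S_{n−1} satisfy S_{n+1}'(x) = n·x·ε/(x² − 4) and S_{n−1}'(x) = n·x·ε/(x² − 4). -/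
open Polynomial

lemma chebS_key (ζ w : ℂ) (hw : ζ * w = 1) (m : ℕ) :
    aeval (ζ + w) (chebS m) * (ζ - w) = ζ ^ m - w ^ m ∧
    aeval (ζ + w) (derivative (chebS m)) * (ζ - w) ^ 3 =
      (m : ℂ) * (ζ ^ m + w ^ m) * (ζ - w) - (ζ ^ m - w ^ m) * (ζ + w) := by
  induction m using Nat.twoStepInduction with
  | zero => simp [chebS]
  | one => simp [chebS]; ring
  | more m ih0 ih1 =>
    obtain ⟨hA0, hB0⟩ := ih0
    obtain ⟨hA1, hB1⟩ := ih1
    constructor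
    · simp only [chebS, map_sub, map_mul, aeval_X]
      push_cast [Nat.cast_add] at hB1 ⊢
      linear_combination (ζ + w) * hA1 - hA0 + (ζ ^ m - w ^ m) * hw
    · simp only [chebS, derivative_sub, derivative_mul, derivative_X, map_sub, map_mul, map_add,
        aeval_X, map_one]
      push_cast [Nat.cast_add] at hB1 ⊢
      linear_combination (ζ - w) ^ 2 * hA1 + (ζ + w) * hB1 - hB0 +
        ((m : ℂ) * (ζ ^ m + w ^ m) * (ζ - w) - (ζ ^ m - w ^ m) * (ζ + w)) * hw

theorem Sz_derivative_succ_pred (n : ℤ) (hn : 1 ≤ n) (ε : ℂ) (hε : ε = 1 ∨ ε = -1)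
    (ζ : ℂ) (hζ1 : ζ ≠ 1) (hζ2 : ζ ≠ -1) (hζn : ζ ^ n = ε) :
    aeval (ζ + ζ⁻¹) (derivative (Sz (n + 1))) =
        (n : ℂ) * (ζ + ζ⁻¹) * ε / ((ζ + ζ⁻¹) ^ 2 - 4) ∧
      aeval (ζ + ζ⁻¹) (derivative (Sz (n - 1))) =
        (n : ℂ) * (ζ + ζ⁻¹) * ε / ((ζ + ζ⁻¹) ^ 2 - 4) := by
  have hε2 : ε * ε = 1 := by rcases hε with h | h <;> norm_num [h]
  have hε0 : ε ≠ 0 := by rcases hε with h | h <;> norm_num [h]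
  have hζ0 : ζ ≠ 0 := by
    intro h
    rw [h, zero_zpow n (by omega)] at hζn
    exact hε0 hζn.symm
  have hw : ζ * ζ⁻¹ = 1 := mul_inv_cancel₀ hζ0
  set w := ζ⁻¹ with hwdef
  have hd : ζ - w ≠ 0 := by
    intro h
    have hzz : ζ * ζ = 1 := by rw [sub_eq_zero] at h; rw [← h] at hw; exact hw
    have h2 : (ζ - 1) * (ζ + 1) = 0 := by linear_combination hzz
    rcases mul_eq_zero.mp h2 with h3 | h3
    · exact hζ1 (by linear_combination h3)
    · exact hζ2 (by linear_combination h3)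
  obtain ⟨k, hk⟩ : ∃ k : ℕ, n = (k : ℤ) + 1 := ⟨(n - 1).toNat, by omega⟩
  have hpk : ζ ^ (k + 1) = ε := by
    rw [hk] at hζn
    rw [← hζn]
    rw [← zpow_natCast]
    push_cast
    ring_nf
  have hwk : w ^ (k + 1) = ε := by
    rw [hwdef, inv_pow, hpk]
    rcases hε with h | h <;> norm_num [h]
  have h1 : Sz (n + 1) = chebS (k + 2) := by
    rw [Sz, if_pos (by omega)]
    congr 1
    omega
  have h2 : Sz (n - 1) = chebS k := by
    rw [Sz, if_pos (by omega)]
    congr 1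
    omega
  have hdenom : (ζ + w) ^ 2 - 4 = (ζ - w) ^ 2 := by linear_combination 4 * hw
  have hdne : (ζ + w) ^ 2 - 4 ≠ 0 := by
    rw [hdenom]; exact pow_ne_zero _ hd
  have hnk : (n : ℂ) = (k : ℂ) + 1 := by rw [hk]; push_cast; ring
  constructor
  · rw [h1, eq_div_iff hdne, hdenom]
    have hB := (chebS_key ζ w hw (k + 2)).2
    have hz2 : ζ ^ (k + 2) = ε * ζ := by rw [pow_succ, hpk]
    have hw2 : w ^ (k + 2) = ε * w := by rw [pow_succ, hwk]
    rw [hz2, hw2] at hB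
    push_cast at hB ⊢
    have key := mul_right_cancel₀ hd (show
        (aeval (ζ + w) (derivative (chebS (k + 2))) * (ζ - w) ^ 2) * (ζ - w) =
          (((k : ℂ) + 1) * (ζ + w) * ε) * (ζ - w) by linear_combination hB)
    rw [hnk]
    linear_combination key
  · rw [h2, eq_div_iff hdne, hdenom]
    have hB := (chebS_key ζ w hw k).2
    have hz2 : ζ ^ k = ε * w := by
      have h' : ζ ^ k * ζ = ε := by rw [← pow_succ, hpk]
      linear_combination w * h' - ζ ^ k * hw
    have hw2 : w ^ k = ε * ζ := by
      have h' : w ^ k * w = ε := by rw [← pow_succ, hwk]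
      linear_combination ζ * h' - w ^ k * hw
    rw [hz2, hw2] at hB
    have key := mul_right_cancel₀ hd (show
        (aeval (ζ + w) (derivative (chebS k)) * (ζ - w) ^ 2) * (ζ - w) =
          (((k : ℂ) + 1) * (ζ + w) * ε) * (ζ - w) by linear_combination hB)
    rw [hnk]
    linear_combination key
end

section
/- Let H, C₁, C₂ be arbitrary matrices in SL(2, ℂ), set C₃ = C₁C₂, and put u = tr(H), xᵢ = tr(Cᵢ) and yᵢ = tr(HCᵢ) for i = 1, 2, 3. Then y₃² − (u·x₃ + x₁y₂ + x₂y₁ − u·x₁x₂)·y₃ + (u² + x₁² + x₂² + y₁² + y₂² + x₃² + y₁y₂x₃ − u·x₁y₁ − u·x₂y₂ − x₁x₂x₃ − 4) = 0. -/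
/-- The group `SL(2, ℂ)`. -/
abbrev SL2C := Matrix.SpecialLinearGroup (Fin 2) ℂ

/-- The trace of an element of `SL(2, ℂ)`. -/
noncomputable def trSL (A : SL2C) : ℂ := Matrix.trace (A : Matrix (Fin 2) (Fin 2) ℂ)

theorem free_group_char_relation (H C1 C2 C3 : SL2C) (hC3 : C3 = C1 * C2)
    (u x1 x2 x3 y1 y2 y3 : ℂ)
    (hu : u = trSL H) (hx1 : x1 = trSL C1) (hx2 : x2 = trSL C2) (hx3 : x3 = trSL C3)
    (hy1 : y1 = trSL (H * C1)) (hy2 : y2 = trSL (H * C2)) (hy3 : y3 = trSL (H * C3)) :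
    y3 ^ 2 - (u * x3 + x1 * y2 + x2 * y1 - u * x1 * x2) * y3 +
      (u ^ 2 + x1 ^ 2 + x2 ^ 2 + y1 ^ 2 + y2 ^ 2 + x3 ^ 2 + y1 * y2 * x3 -
        u * x1 * y1 - u * x2 * y2 - x1 * x2 * x3 - 4) = 0 := by
  subst hC3 hu hx1 hx2 hx3 hy1 hy2 hy3
  have hH : (H : Matrix (Fin 2) (Fin 2) ℂ) 0 0 * (H : Matrix (Fin 2) (Fin 2) ℂ) 1 1
      - (H : Matrix (Fin 2) (Fin 2) ℂ) 0 1 * (H : Matrix (Fin 2) (Fin 2) ℂ) 1 0 = 1 := by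
    rw [← Matrix.det_fin_two]; exact H.property
  have h1 : (C1 : Matrix (Fin 2) (Fin 2) ℂ) 0 0 * (C1 : Matrix (Fin 2) (Fin 2) ℂ) 1 1
      - (C1 : Matrix (Fin 2) (Fin 2) ℂ) 0 1 * (C1 : Matrix (Fin 2) (Fin 2) ℂ) 1 0 = 1 := by
    rw [← Matrix.det_fin_two]; exact C1.property
  have h2 : (C2 : Matrix (Fin 2) (Fin 2) ℂ) 0 0 * (C2 : Matrix (Fin 2) (Fin 2) ℂ) 1 1
      - (C2 : Matrix (Fin 2) (Fin 2) ℂ) 0 1 * (C2 : Matrix (Fin 2) (Fin 2) ℂ) 1 0 = 1 := by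
    rw [← Matrix.det_fin_two]; exact C2.property
  set ah := (H : Matrix (Fin 2) (Fin 2) ℂ) 0 0
  set bh := (H : Matrix (Fin 2) (Fin 2) ℂ) 0 1
  set ch := (H : Matrix (Fin 2) (Fin 2) ℂ) 1 0
  set dh := (H : Matrix (Fin 2) (Fin 2) ℂ) 1 1
  set a1 := (C1 : Matrix (Fin 2) (Fin 2) ℂ) 0 0
  set b1 := (C1 : Matrix (Fin 2) (Fin 2) ℂ) 0 1
  set c1 := (C1 : Matrix (Fin 2) (Fin 2) ℂ) 1 0
  set d1 := (C1 : Matrix (Fin 2) (Fin 2) ℂ) 1 1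
  set a2 := (C2 : Matrix (Fin 2) (Fin 2) ℂ) 0 0
  set b2 := (C2 : Matrix (Fin 2) (Fin 2) ℂ) 0 1
  set c2 := (C2 : Matrix (Fin 2) (Fin 2) ℂ) 1 0
  set d2 := (C2 : Matrix (Fin 2) (Fin 2) ℂ) 1 1
  simp only [trSL, Matrix.SpecialLinearGroup.coe_mul, Matrix.trace_fin_two,
    Matrix.mul_apply, Fin.sum_univ_two]
  linear_combination ((2) + (-1)*d2^2 + (-1)*a2^2 + (-1)*d1^2 + d1^2*a2*d2 + (-1)*c1*d1*b2*d2 + c1*d1*a2*b2 + (-1)*c1^2*b2^2 + (-1)*b1*d1*c2*d2 + b1*d1*a2*c2 + (-1)*b1^2*c2^2 + a1*d1*d2^2 + (-2)*a1*d1*a2*d2 + a1*d1*a2^2 + a1*c1*b2*d2 + (-1)*a1*c1*a2*b2 + a1*b1*c2*d2 + (-1)*a1*b1*a2*c2 + (-1)*a1^2 + a1^2*a2*d2) * hH + ((2) + (-2)*a2*d2 + (-1)*dh^2 + dh^2*a2*d2 + (-1)*ch*dh*b2*d2 + ch*dh*a2*b2 + (-1)*ch^2*b2^2 + (-1)*bh*dh*c2*d2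 + bh*dh*a2*c2 + bh*ch*d2^2 + (-2)*bh*ch*a2*d2 + bh*ch*a2^2 + (-1)*bh^2*c2^2 + ah*ch*b2*d2 + (-1)*ah*ch*a2*b2 + ah*bh*c2*d2 + (-1)*ah*bh*a2*c2 + (-1)*ah^2 + ah^2*a2*d2) * h1 + ((-2)*b1*c1 + dh^2*b1*c1 + (-1)*ch*dh*b1*d1 + ch*dh*a1*b1 + (-1)*ch^2*b1^2 + (-1)*bh*dh*c1*d1 + bh*dh*a1*c1 + (-2)*bh*ch + bh*ch*d1^2 + (-2)*bh*ch*b1*c1 + bh*ch*a1^2 + (-1)*bh^2*c1^2 + ah*ch*b1*d1 + (-1)*ah*ch*a1*b1 + ah*bh*c1*d1 + (-1)*ah*bh*a1*c1 + ah^2*b1*c1) * h2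
end

section
/- Let H and C be matrices in SL(2, ℂ) with HC = CH, and put u = tr(H), x = tr(C), y = tr(HC). Then u² + x² + y² − u·x·y − 4 = 0. -/
theorem commuting_trace_relation (H C : SL2C) (hcomm : H * C = C * H)
    (u x y : ℂ) (hu : u = trSL H) (hx : x = trSL C) (hy : y = trSL (H * C)) :
    u ^ 2 + x ^ 2 + y ^ 2 - u * x * y - 4 = 0 := by
  set a := H.1 0 0 with ha
  set b := H.1 0 1 with hb
  set c := H.1 1 0 with hc
  set d := H.1 1 1 with hd
  set e := C.1 0 0 with he
  set f := C.1 0 1 with hf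
  set g := C.1 1 0 with hg
  set h := C.1 1 1 with hh
  have hdH : a * d - b * c = 1 := by
    have := H.2; rw [Matrix.det_fin_two] at this; linear_combination this
  have hdC : e * h - f * g = 1 := by
    have := C.2; rw [Matrix.det_fin_two] at this; linear_combination this
  have hcomm' : H.1 * C.1 = C.1 * H.1 := by
    have := congrArg (Subtype.val) hcomm
    simpa using this
  have h00 : a * e + b * g = e * a + f * c := by
    have := congrFun (congrFun hcomm' 0) 0
    simpa [Matrix.mul_apply, Fin.sum_univ_two, mul_comm] using this
  have h01 : a * f + b * h = e * b + f * d := by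
    have := congrFun (congrFun hcomm' 0) 1
    simpa [Matrix.mul_apply, Fin.sum_univ_two, mul_comm] using this
  have h10 : c * e + d * g = g * a + h * c := by
    have := congrFun (congrFun hcomm' 1) 0
    simpa [Matrix.mul_apply, Fin.sum_univ_two, mul_comm] using this
  have hu' : u = a + d := by
    rw [hu]; simp [trSL, Matrix.trace, Matrix.diag, Fin.sum_univ_two, ha, hd]
  have hx' : x = e + h := by
    rw [hx]; simp [trSL, Matrix.trace, Matrix.diag, Fin.sum_univ_two, he, hh]
  have hy' : y = a * e + b * g + (c * f + d * h) := by
    rw [hy]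
    simp [trSL, Matrix.trace, Matrix.diag, Fin.sum_univ_two, Matrix.mul_apply,
      Matrix.SpecialLinearGroup.coe_mul, ha, hb, hc, hd, he, hf, hg, hh]
  subst hu' hx' hy'
  linear_combination (-e^2 - 2*f*g - h^2 + 2) * hdH + (-a^2 - 2*b*c - d^2 + 2) * hdC +
    (b*g - c*f - d*e + d*h) * h00 + (-a*g + c*e - c*h) * h01 + (-d*f) * h10
end

section
/- Let H, C₁, C₂ be matrices in SL(2, ℂ) with HC₁ = C₁H and HC₂ = C₂H. Set C₃ = C₁C₂, u = tr(H), xᵢ = tr(Cᵢ) and yᵢ = tr(HCᵢ) for i = 1, 2, 3. Then 2y₁ = u·x₁ + x₂y₃ − x₃y₂ and 2y₂ = u·x₂ + x₁y₃ − x₃y₁. -/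
set_option maxRecDepth 8000


lemma sl2_add_inv (S : SL2C) :
    (S : Matrix (Fin 2) (Fin 2) ℂ) + ((S⁻¹ : SL2C) : Matrix (Fin 2) (Fin 2) ℂ)
      = (trSL S) • (1 : Matrix (Fin 2) (Fin 2) ℂ) := by
  rw [Matrix.SpecialLinearGroup.coe_inv, Matrix.adjugate_fin_two]
  ext i j
  fin_cases i <;> fin_cases j <;>
    simp [trSL, Matrix.trace_fin_two, Matrix.add_apply, Matrix.smul_apply,
      Matrix.one_apply, smul_eq_mul] <;> ring

lemma trace_key (M : Matrix (Fin 2) (Fin 2) ℂ) (S : SL2C) :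
    Matrix.trace (M * (S : Matrix (Fin 2) (Fin 2) ℂ))
      + Matrix.trace (M * ((S⁻¹ : SL2C) : Matrix (Fin 2) (Fin 2) ℂ))
      = Matrix.trace M * trSL S := by
  rw [← Matrix.trace_add, ← Matrix.mul_add, sl2_add_inv, Matrix.mul_smul,
    Matrix.mul_one, Matrix.trace_smul, smul_eq_mul, mul_comm]

lemma key_sl2 (A B : SL2C) : trSL (A * B) + trSL (A * B⁻¹) = trSL A * trSL B := by
  have := trace_key (A : Matrix (Fin 2) (Fin 2) ℂ) B
  simpa [trSL, Matrix.SpecialLinearGroup.coe_mul] using this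

lemma trmc_sl2 (A B : SL2C) : trSL (A * B) = trSL (B * A) := by
  unfold trSL
  rw [Matrix.SpecialLinearGroup.coe_mul, Matrix.SpecialLinearGroup.coe_mul,
    Matrix.trace_mul_comm]

theorem commuting_trace_rel2 (H C1 C2 C3 : SL2C) (hC3 : C3 = C1 * C2)
    (h1 : H * C1 = C1 * H) (h2 : H * C2 = C2 * H)
    (u x1 x2 x3 y1 y2 y3 : ℂ)
    (hu : u = trSL H) (hx1 : x1 = trSL C1) (hx2 : x2 = trSL C2) (hx3 : x3 = trSL C3)
    (hy1 : y1 = trSL (H * C1)) (hy2 : y2 = trSL (H * C2)) (hy3 : y3 = trSL (H * C3)) :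
    2 * y1 = u * x1 + x2 * y3 - x3 * y2 ∧ 2 * y2 = u * x2 + x1 * y3 - x3 * y1 := by
  have hcomm3 : C3 * H = H * C3 := by
    rw [hC3, mul_assoc, ← h2, ← mul_assoc, ← h1, mul_assoc]
  have hinv1 : C1⁻¹ * H * C1 = H := by
    rw [mul_assoc, h1, ← mul_assoc, inv_mul_cancel, one_mul]
  have hinv1' : C1⁻¹ * H⁻¹ * C1 = H⁻¹ := by
    have : H⁻¹ * C1 = C1 * H⁻¹ := by
      apply_fun (fun x => H⁻¹ * x * H⁻¹) at h1
      simpa [mul_assoc] using h1.symm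
    rw [mul_assoc, this, ← mul_assoc, inv_mul_cancel, one_mul]
  constructor
  · -- 2 y1 = u x1 + x2 y3 - x3 y2
    have e1 := key_sl2 C3 (H * C2)
    have eA : C3 * (H * C2) = (H * C3) * C2 := by
      rw [← mul_assoc, hcomm3]
    have e2 := key_sl2 (H * C3) C2
    have e3 : trSL ((H * C3) * C2⁻¹) = y1 := by
      rw [hC3, show H * (C1 * C2) * C2⁻¹ = H * C1 by group, ← hy1]
    have e4 : trSL (C3 * (H * C2)⁻¹) = x1 * u - y1 := by
      have : C3 * (H * C2)⁻¹ = C1 * H⁻¹ := by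
        rw [hC3, mul_inv_rev]; group
      rw [this]
      have e5 := key_sl2 C1 H
      have e6 : trSL (C1 * H) = y1 := by rw [← h1, ← hy1]
      rw [e6, ← hx1, ← hu] at e5
      linear_combination e5
    rw [eA, ← hx3, ← hy2] at e1
    rw [e3, ← hx2, ← hy3] at e2
    linear_combination e2 - e1 + e4
  · -- 2 y2 = u x2 + x1 y3 - x3 y1
    have e1 := key_sl2 C3 (H * C1)
    have eA : C3 * (H * C1) = (H * C3) * C1 := by
      rw [← mul_assoc, hcomm3]
    have e2 := key_sl2 (H * C3) C1
    have e3 : trSL ((H * C3) * C1⁻¹) = y2 := by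
      rw [show (H * C3) * C1⁻¹ = (H * C1 * C2) * C1⁻¹ by rw [hC3]; group,
        trmc_sl2, show C1⁻¹ * (H * C1 * C2) = (C1⁻¹ * H * C1) * C2 by group,
        hinv1, ← hy2]
    have e4 : trSL (C3 * (H * C1)⁻¹) = x2 * u - y2 := by
      rw [show C3 * (H * C1)⁻¹ = C1 * (C2 * C1⁻¹ * H⁻¹) by rw [hC3, mul_inv_rev]; group,
        trmc_sl2, show (C2 * C1⁻¹ * H⁻¹) * C1 = C2 * (C1⁻¹ * H⁻¹ * C1) by group,
        hinv1']
      have e5 := key_sl2 C2 H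
      have e6 : trSL (C2 * H) = y2 := by rw [← h2, ← hy2]
      rw [e6, ← hx2, ← hu] at e5
      linear_combination e5
    rw [eA, ← hx3, ← hy1] at e1
    rw [e3, ← hx1, ← hy3] at e2
    linear_combination e2 - e1 + e4
end

section
/- Let H, C₁, C₂ be matrices in SL(2, ℂ) with HC₁ = C₁H and HC₂ = C₂H, and let p, q ≥ 1 be integers with C₁ᵖ = H^q. Set C₃ = C₁C₂, u = tr(H), xᵢ = tr(Cᵢ) and yᵢ = tr(HCᵢ) for i = 1, 2, 3. Then S_q(u)·y₂ − S_{q−1}(u)·x₂ = S_p(x₁)·x₃ − S_{p−1}(x₁)·x₂ and S_{q+1}(u)·y₂ − S_q(u)·x₂ = S_p(x₁)·y₃ − S_{p−1}(x₁)·y₂. -/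
open Polynomial

lemma aux_sq' (a b c d : ℂ) (h : a * d - b * c = 1) :
    !![a, b; c, d] * !![a, b; c, d] = (a + d) • !![a, b; c, d] - 1 := by
  rw [Matrix.mul_fin_two, Matrix.one_fin_two]
  ext i j
  fin_cases i <;> fin_cases j <;>
    simp [Matrix.sub_apply, Matrix.smul_apply, smul_eq_mul] <;>
    (first | ring1 | linear_combination -h)

lemma aux_sl2_sq (A : Matrix (Fin 2) (Fin 2) ℂ) (h : A.det = 1) :
    A * A = A.trace • A - 1 := by
  rw [Matrix.det_fin_two] at h
  rw [Matrix.eta_fin_two A, Matrix.trace_fin_two_of]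
  exact aux_sq' _ _ _ _ h

lemma aux_sl2_pow (A : Matrix (Fin 2) (Fin 2) ℂ) (h : A.det = 1) (n : ℕ) :
    A ^ (n + 1) = (aeval A.trace (chebS (n + 1))) • A - (aeval A.trace (chebS n)) • 1 := by
  induction n with
  | zero => simp [chebS]
  | succ n ih =>
    rw [pow_succ, ih, show chebS (n + 1 + 1) = X * chebS (n + 1) - chebS n from rfl]
    rw [Matrix.sub_mul, Matrix.smul_mul, Matrix.smul_mul, Matrix.one_mul, aux_sl2_sq A h]
    simp only [map_sub, map_mul, aeval_X]
    module

lemma aux_Sz_of (n : ℤ) (k : ℕ) (h : n = k) : Sz n = chebS k := by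
  subst h; simp [Sz]

theorem seifert_rel_7_11 (H C1 C2 C3 : SL2C) (hC3 : C3 = C1 * C2)
    (h1 : H * C1 = C1 * H) (h2 : H * C2 = C2 * H)
    (p q : ℤ) (hp : 1 ≤ p) (hq : 1 ≤ q) (hrel : C1 ^ p = H ^ q)
    (u x1 x2 x3 y1 y2 y3 : ℂ)
    (hu : u = trSL H) (hx1 : x1 = trSL C1) (hx2 : x2 = trSL C2) (hx3 : x3 = trSL C3)
    (hy1 : y1 = trSL (H * C1)) (hy2 : y2 = trSL (H * C2)) (hy3 : y3 = trSL (H * C3)) :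
    aeval u (Sz q) * y2 - aeval u (Sz (q - 1)) * x2 =
        aeval x1 (Sz p) * x3 - aeval x1 (Sz (p - 1)) * x2 ∧
      aeval u (Sz (q + 1)) * y2 - aeval u (Sz q) * x2 =
        aeval x1 (Sz p) * y3 - aeval x1 (Sz (p - 1)) * y2 := by
  obtain ⟨b, hb⟩ : ∃ b : ℕ, p = (b : ℤ) + 1 := ⟨(p - 1).toNat, by omega⟩
  obtain ⟨a, ha⟩ : ∃ a : ℕ, q = (a : ℤ) + 1 := ⟨(q - 1).toNat, by omega⟩
  rw [aux_Sz_of p (b + 1) (by omega), aux_Sz_of (p - 1) b (by omega),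
    aux_Sz_of q (a + 1) (by omega), aux_Sz_of (q - 1) a (by omega),
    aux_Sz_of (q + 1) (a + 2) (by omega)]
  -- transfer the relation to matrices
  have hrel' : C1 ^ (b + 1) = H ^ (a + 1) := by
    have : C1 ^ (((b + 1 : ℕ) : ℤ)) = H ^ (((a + 1 : ℕ) : ℤ)) := by
      rw [show ((b + 1 : ℕ) : ℤ) = (b : ℤ) + 1 by push_cast; ring,
        show ((a + 1 : ℕ) : ℤ) = (a : ℤ) + 1 by push_cast; ring, ← hb, ← ha]
      exact hrel
    rwa [zpow_natCast, zpow_natCast] at this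
  have dC1 : (C1 : Matrix (Fin 2) (Fin 2) ℂ).det = 1 := C1.prop
  have dH : (H : Matrix (Fin 2) (Fin 2) ℂ).det = 1 := H.prop
  have hM : (C1 : Matrix (Fin 2) (Fin 2) ℂ) ^ (b + 1) = (H : Matrix (Fin 2) (Fin 2) ℂ) ^ (a + 1) := by
    have := congrArg (fun A : SL2C => (A : Matrix (Fin 2) (Fin 2) ℂ)) hrel'
    simpa using this
  have E : (aeval (trSL C1) (chebS (b + 1))) • (C1 : Matrix (Fin 2) (Fin 2) ℂ)
        - (aeval (trSL C1) (chebS b)) • 1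
      = (aeval (trSL H) (chebS (a + 1))) • (H : Matrix (Fin 2) (Fin 2) ℂ)
        - (aeval (trSL H) (chebS a)) • 1 := by
    rw [show trSL C1 = (C1 : Matrix (Fin 2) (Fin 2) ℂ).trace from rfl,
      show trSL H = (H : Matrix (Fin 2) (Fin 2) ℂ).trace from rfl,
      ← aux_sl2_pow _ dC1 b, ← aux_sl2_pow _ dH a]
    exact hM
  -- traces
  subst hu hx1 hx2 hx3 hy2 hy3 hC3
  simp only [trSL, Matrix.SpecialLinearGroup.coe_mul]
  have t1 := congrArg (fun M => Matrix.trace (M * (C2 : Matrix (Fin 2) (Fin 2) ℂ))) E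
  have t2 := congrArg (fun M => Matrix.trace ((H : Matrix (Fin 2) (Fin 2) ℂ) * M
      * (C2 : Matrix (Fin 2) (Fin 2) ℂ))) E
  have tH := congrArg (fun M => Matrix.trace (M * (C2 : Matrix (Fin 2) (Fin 2) ℂ)))
      (aux_sl2_sq _ dH)
  simp only [Matrix.sub_mul, Matrix.smul_mul, Matrix.mul_sub, Matrix.mul_smul, Matrix.one_mul,
    Matrix.mul_one, Matrix.trace_sub, Matrix.trace_smul, smul_eq_mul, trSL,
    ← Matrix.mul_assoc] at t1 t2 tH
  rw [show chebS (a + 2) = X * chebS (a + 1) - chebS a from rfl]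
  simp only [map_sub, map_mul, aeval_X, ← Matrix.mul_assoc]
  constructor
  · linear_combination -t1
  · linear_combination -t2 - aeval (Matrix.trace (H : Matrix (Fin 2) (Fin 2) ℂ)) (chebS (a + 1)) * tH
end

section
/- Let H, C₁, C₂ be matrices in SL(2, ℂ) with HC₁ = C₁H and HC₂ = C₂H, and let p, q ≥ 1 be integers with (C₁C₂)ᵖ = H^q. Set C₃ = C₁C₂, u = tr(H), xᵢ = tr(Cᵢ) and yᵢ = tr(HCᵢ) for i = 1, 2, 3. Then S_{q+1}(u)·y₁ − S_q(u)·x₁ = S_p(x₃)·(x₁y₃ − y₂) − S_{p−1}(x₃)·y₁ and S_{q+1}(u)·y₂ − S_q(u)·x₂ = S_p(x₃)·(x₂y₃ − y₁) − S_{p−1}(x₃)·y₂. -/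
open Polynomial

abbrev M2 := Matrix (Fin 2) (Fin 2) ℂ

lemma sl2_sq (A : SL2C) : (A : M2) * (A : M2) = trSL A • (A : M2) - 1 := by
  have hdet : Matrix.det (A : M2) = 1 := A.2
  rw [Matrix.det_fin_two] at hdet
  have htr : trSL A = (A : M2) 0 0 + (A : M2) 1 1 := by
    simp [trSL, Matrix.trace_fin_two]
  rw [htr, Matrix.eta_fin_two (A : M2)]
  ext i j
  fin_cases i <;> fin_cases j <;>
    simp [Matrix.mul_apply, Fin.sum_univ_two, Matrix.one_apply] <;>
    first | ring1 | linear_combination -hdet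

lemma sl2_pow (A : SL2C) (n : ℕ) :
    (A : M2) ^ (n + 1) =
      aeval (trSL A) (chebS (n + 1)) • (A : M2) - aeval (trSL A) (chebS n) • (1 : M2) := by
  induction n with
  | zero => simp [chebS]
  | succ n ih =>
      rw [pow_succ, ih, show chebS (n+2) = X * chebS (n+1) - chebS n from rfl]
      rw [sub_mul, smul_mul_assoc, smul_mul_assoc, sl2_sq, one_mul]
      simp only [map_sub, map_mul, aeval_X, smul_sub, smul_smul]
      module

lemma trace_mul_pow (A : SL2C) (B : M2) (n : ℕ) :
    Matrix.trace (B * (A : M2) ^ (n + 1)) =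
      aeval (trSL A) (chebS (n + 1)) * Matrix.trace (B * (A : M2)) -
        aeval (trSL A) (chebS n) * Matrix.trace B := by
  rw [sl2_pow, mul_sub, Matrix.trace_sub, mul_smul_comm, mul_smul_comm,
    Matrix.trace_smul, Matrix.trace_smul, mul_one, smul_eq_mul, smul_eq_mul]

theorem seifert_rel_12 (H C1 C2 C3 : SL2C) (hC3 : C3 = C1 * C2)
    (h1 : H * C1 = C1 * H) (h2 : H * C2 = C2 * H)
    (p q : ℤ) (hp : 1 ≤ p) (hq : 1 ≤ q) (hrel : (C1 * C2) ^ p = H ^ q)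
    (u x1 x2 x3 y1 y2 y3 : ℂ)
    (hu : u = trSL H) (hx1 : x1 = trSL C1) (hx2 : x2 = trSL C2) (hx3 : x3 = trSL C3)
    (hy1 : y1 = trSL (H * C1)) (hy2 : y2 = trSL (H * C2)) (hy3 : y3 = trSL (H * C3)) :
    aeval u (Sz (q + 1)) * y1 - aeval u (Sz q) * x1 =
        aeval x3 (Sz p) * (x1 * y3 - y2) - aeval x3 (Sz (p - 1)) * y1 ∧
      aeval u (Sz (q + 1)) * y2 - aeval u (Sz q) * x2 =
        aeval x3 (Sz p) * (x2 * y3 - y1) - aeval x3 (Sz (p - 1)) * y2 := by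
  obtain ⟨b, hpb⟩ : ∃ b : ℕ, p = (b : ℤ) + 1 := ⟨(p - 1).toNat, by omega⟩
  obtain ⟨a, hqa⟩ : ∃ a : ℕ, q = (a : ℤ) + 1 := ⟨(q - 1).toNat, by omega⟩
  have hSz : ∀ n : ℕ, Sz (n : ℤ) = chebS n := fun n => by simp [Sz]
  have e1 : Sz (q + 1) = chebS (a + 2) := by
    rw [hqa, show ((a : ℤ) + 1 + 1) = ((a + 2 : ℕ) : ℤ) by push_cast; ring, hSz]
  have e2 : Sz q = chebS (a + 1) := by
    rw [hqa, show ((a : ℤ) + 1) = ((a + 1 : ℕ) : ℤ) by push_cast; ring, hSz]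
  have e3 : Sz p = chebS (b + 1) := by
    rw [hpb, show ((b : ℤ) + 1) = ((b + 1 : ℕ) : ℤ) by push_cast; ring, hSz]
  have e4 : Sz (p - 1) = chebS b := by
    rw [hpb, show ((b : ℤ) + 1 - 1) = ((b : ℕ) : ℤ) by push_cast; ring, hSz]
  have hrel' : (C1 * C2) ^ (b + 1) = H ^ (a + 1) := by
    have h := hrel
    rw [hpb, hqa, show ((b : ℤ) + 1) = ((b + 1 : ℕ) : ℤ) by push_cast; ring,
      show ((a : ℤ) + 1) = ((a + 1 : ℕ) : ℤ) by push_cast; ring,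
      zpow_natCast, zpow_natCast] at h
    exact h
  have hc3m : (C3 : M2) = (C1 : M2) * (C2 : M2) := by
    rw [hC3, Matrix.SpecialLinearGroup.coe_mul]
  have hM : (C3 : M2) ^ (b + 1) = (H : M2) ^ (a + 1) := by
    rw [hC3, ← Matrix.SpecialLinearGroup.coe_pow, ← Matrix.SpecialLinearGroup.coe_pow, hrel']
  have h1' : (H : M2) * (C1 : M2) = (C1 : M2) * (H : M2) := by
    rw [← Matrix.SpecialLinearGroup.coe_mul, ← Matrix.SpecialLinearGroup.coe_mul, h1]
  have h2' : (H : M2) * (C2 : M2) = (C2 : M2) * (H : M2) := by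
    rw [← Matrix.SpecialLinearGroup.coe_mul, ← Matrix.SpecialLinearGroup.coe_mul, h2]
  have tx1 : Matrix.trace (C1 : M2) = x1 := hx1.symm
  have tx2 : Matrix.trace (C2 : M2) = x2 := hx2.symm
  have ty1 : Matrix.trace ((H : M2) * (C1 : M2)) = y1 := by
    rw [hy1, trSL, Matrix.SpecialLinearGroup.coe_mul]
  have ty2 : Matrix.trace ((H : M2) * (C2 : M2)) = y2 := by
    rw [hy2, trSL, Matrix.SpecialLinearGroup.coe_mul]
  have ty3 : Matrix.trace ((H : M2) * (C1 : M2) * (C2 : M2)) = y3 := by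
    rw [hy3, trSL, Matrix.SpecialLinearGroup.coe_mul, hc3m, mul_assoc]
  -- trace of H*C1*C3
  have t13 : Matrix.trace ((H : M2) * (C1 : M2) * (C3 : M2)) = x1 * y3 - y2 := by
    rw [hc3m, show (H : M2) * (C1 : M2) * ((C1 : M2) * (C2 : M2))
        = (H : M2) * ((C1 : M2) * (C1 : M2)) * (C2 : M2) by noncomm_ring,
      sl2_sq, mul_sub, sub_mul, mul_smul_comm, smul_mul_assoc, mul_one,
      Matrix.trace_sub, Matrix.trace_smul, smul_eq_mul, ty3, ty2, hx1]
  -- trace of H*C2*C3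
  have t23 : Matrix.trace ((H : M2) * (C2 : M2) * (C3 : M2)) = x2 * y3 - y1 := by
    have step : Matrix.trace ((H : M2) * (C2 : M2) * (C1 : M2)) = y3 := by
      rw [Matrix.trace_mul_comm, ← mul_assoc, ← h1', ty3]
    rw [hc3m, ← mul_assoc, Matrix.trace_mul_comm,
      show (C2 : M2) * ((H : M2) * (C2 : M2) * (C1 : M2))
        = (C2 : M2) * (H : M2) * (C2 : M2) * (C1 : M2) by noncomm_ring,
      ← h2',
      show (H : M2) * (C2 : M2) * (C2 : M2) * (C1 : M2)
        = (H : M2) * ((C2 : M2) * (C2 : M2)) * (C1 : M2) by noncomm_ring,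
      sl2_sq, mul_sub, sub_mul, mul_smul_comm, smul_mul_assoc, mul_one,
      Matrix.trace_sub, Matrix.trace_smul, smul_eq_mul, step, ty1, hx2]
  have key1 : Matrix.trace ((C1 : M2) * (H : M2) ^ (a + 1 + 1))
      = Matrix.trace ((H : M2) * (C1 : M2) * (C3 : M2) ^ (b + 1)) := by
    rw [hM, h1', mul_assoc, ← pow_succ']
  have key2 : Matrix.trace ((C2 : M2) * (H : M2) ^ (a + 1 + 1))
      = Matrix.trace ((H : M2) * (C2 : M2) * (C3 : M2) ^ (b + 1)) := by
    rw [hM, h2', mul_assoc, ← pow_succ']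
  rw [e1, e2, e3, e4]
  constructor
  · calc aeval u (chebS (a + 2)) * y1 - aeval u (chebS (a + 1)) * x1
        = Matrix.trace ((C1 : M2) * (H : M2) ^ (a + 1 + 1)) := by
          rw [hu, trace_mul_pow, Matrix.trace_mul_comm (C1 : M2), ty1, tx1]
      _ = Matrix.trace ((H : M2) * (C1 : M2) * (C3 : M2) ^ (b + 1)) := key1
      _ = aeval x3 (chebS (b + 1)) * (x1 * y3 - y2) - aeval x3 (chebS b) * y1 := by
          rw [hx3, trace_mul_pow, t13, ty1]
  · calc aeval u (chebS (a + 2)) * y2 - aeval u (chebS (a + 1)) * x2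
        = Matrix.trace ((C2 : M2) * (H : M2) ^ (a + 1 + 1)) := by
          rw [hu, trace_mul_pow, Matrix.trace_mul_comm (C2 : M2), ty2, tx2]
      _ = Matrix.trace ((H : M2) * (C2 : M2) * (C3 : M2) ^ (b + 1)) := key2
      _ = aeval x3 (chebS (b + 1)) * (x2 * y3 - y1) - aeval x3 (chebS b) * y2 := by
          rw [hx3, trace_mul_pow, t23, ty2]
end
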